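/- arXiv:1707.00965 — 2 statements merged into one kernel-verified Lean document; each statement's English description precedes it below -/
import Mathlib

section
/- For real numbers a > 0, d ≥ 0, c ≠ 0, the integral over ℝ of a(a+d)/((x² + a²)((x + c)² + (a+d)²)) dx equals π(2a + d)/(c² + (2a + d)²). -/
/-!
Partial fractions: `(c² + (a + b)²)(c² + (a - b)²)` times the integrand has the explicit primitive
`lorentzianProductPrimitive`, built from `log ((x² + a²) / ((x + c)² + b²))`, `arctan (x / a)` and
`arctan ((x + c) / b)`. The logarithm tends to `0` at `±∞` and the arctangents to `±π/2`, so that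
multiple of the integral is `π (a + b)(c² + (a - b)²)`, and the factor `c² + (a - b)²` cancels
whenever it is nonzero.
-/

open MeasureTheory Real Filter Topology Bornology

theorem tendsto_sq_add_div_sq_cobounded (p q : ℝ) :
    Tendsto (fun x : ℝ => ((x + p) ^ 2 + q) / x ^ 2) (cobounded ℝ) (𝓝 1) := by
  have hinv : Tendsto (fun x : ℝ => x⁻¹) (cobounded ℝ) (𝓝 0) := tendsto_inv₀_cobounded
  have h : Tendsto (fun x : ℝ => (1 + p * x⁻¹) ^ 2 + q * x⁻¹ ^ 2) (cobounded ℝ)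
      (𝓝 ((1 + p * 0) ^ 2 + q * 0 ^ 2)) :=
    ((tendsto_const_nhds.add (hinv.const_mul p)).pow 2).add ((hinv.pow 2).const_mul q)
  rw [show ((1 : ℝ) + p * 0) ^ 2 + q * 0 ^ 2 = 1 by ring] at h
  refine h.congr' ?_
  filter_upwards [eventually_ne_cobounded 0] with x hx
  field_simp

theorem tendsto_log_sub_log_cobounded (p p' : ℝ) {q q' : ℝ} (hq : 0 < q) (hq' : 0 < q') :
    Tendsto (fun x : ℝ => log ((x + p) ^ 2 + q) - log ((x + p') ^ 2 + q'))
      (cobounded ℝ) (𝓝 0) := by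
  have hratio := (tendsto_sq_add_div_sq_cobounded p q).div
    (tendsto_sq_add_div_sq_cobounded p' q') one_ne_zero
  rw [div_one] at hratio
  have hlog : Tendsto log (𝓝 1) (𝓝 0) := by
    simpa using (continuousAt_log one_ne_zero).tendsto
  refine (hlog.comp hratio).congr' ?_
  filter_upwards [eventually_ne_cobounded 0] with x hx
  rw [Function.comp_apply, Pi.div_apply, div_div_div_cancel_right₀ (pow_ne_zero 2 hx),
    log_div (by positivity) (by positivity)]

theorem hasDerivAt_log_add_sq_add_sq (c : ℝ) {b : ℝ} (hb : b ≠ 0) (x : ℝ) :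
    HasDerivAt (fun x => log ((x + c) ^ 2 + b ^ 2)) (2 * (x + c) / ((x + c) ^ 2 + b ^ 2)) x := by
  have h : HasDerivAt (fun x => (x + c) ^ 2 + b ^ 2) (2 * (x + c)) x := by
    simpa using (((hasDerivAt_id x).add_const c).pow 2).add_const (b ^ 2)
  exact h.log (add_pos_of_nonneg_of_pos (sq_nonneg _) (pow_two_pos_of_ne_zero hb)).ne'

theorem hasDerivAt_arctan_add_div (c : ℝ) {b : ℝ} (hb : b ≠ 0) (x : ℝ) :
    HasDerivAt (fun x => arctan ((x + c) / b)) (b / ((x + c) ^ 2 + b ^ 2)) x := by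
  refine (((hasDerivAt_id x).add_const c).div_const b).arctan.congr_deriv ?_
  simp only [id]
  field_simp
  ring

theorem tendsto_arctan_add_div_atTop (c : ℝ) {b : ℝ} (hb : 0 < b) :
    Tendsto (fun x => arctan ((x + c) / b)) atTop (𝓝 (π / 2)) :=
  (tendsto_arctan_atTop.mono_right nhdsWithin_le_nhds).comp
    ((tendsto_atTop_add_const_right atTop c tendsto_id).atTop_div_const hb)

theorem tendsto_arctan_add_div_atBot (c : ℝ) {b : ℝ} (hb : 0 < b) :
    Tendsto (fun x => arctan ((x + c) / b)) atBot (𝓝 (-(π / 2))) :=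
  (tendsto_arctan_atBot.mono_right nhdsWithin_le_nhds).comp
    ((tendsto_atBot_add_const_right atBot c tendsto_id).atBot_div_const hb)

noncomputable def lorentzianProductPrimitive (a b c x : ℝ) : ℝ :=
  -(a * b * c) * (log (x ^ 2 + a ^ 2) - log ((x + c) ^ 2 + b ^ 2))
    + b * (c ^ 2 + b ^ 2 - a ^ 2) * arctan (x / a)
    + a * (c ^ 2 + a ^ 2 - b ^ 2) * arctan ((x + c) / b)

section LorentzianProduct

variable {a b : ℝ} (c : ℝ)

theorem hasDerivAt_lorentzianProductPrimitive (ha : a ≠ 0) (hb : b ≠ 0) (x : ℝ) :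
    HasDerivAt (lorentzianProductPrimitive a b c)
      ((c ^ 2 + (a + b) ^ 2) * (c ^ 2 + (a - b) ^ 2) *
        (a * b / ((x ^ 2 + a ^ 2) * ((x + c) ^ 2 + b ^ 2)))) x := by
  have hlogA := hasDerivAt_log_add_sq_add_sq 0 ha x
  have hatanA := hasDerivAt_arctan_add_div 0 ha x
  simp only [add_zero] at hlogA hatanA
  have hA : 0 < x ^ 2 + a ^ 2 :=
    add_pos_of_nonneg_of_pos (sq_nonneg _) (pow_two_pos_of_ne_zero ha)
  have hB : 0 < (x + c) ^ 2 + b ^ 2 :=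
    add_pos_of_nonneg_of_pos (sq_nonneg _) (pow_two_pos_of_ne_zero hb)
  refine ((((hlogA.sub (hasDerivAt_log_add_sq_add_sq c hb x)).const_mul (-(a * b * c))).add
    (hatanA.const_mul (b * (c ^ 2 + b ^ 2 - a ^ 2)))).add
    ((hasDerivAt_arctan_add_div c hb x).const_mul (a * (c ^ 2 + a ^ 2 - b ^ 2)))).congr_deriv ?_
  field_simp
  ring

theorem tendsto_lorentzianProductPrimitive_atTop (ha : 0 < a) (hb : 0 < b) :
    Tendsto (lorentzianProductPrimitive a b c) atTop
      (𝓝 (π / 2 * ((a + b) * (c ^ 2 + (a - b) ^ 2)))) := by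
  have hlog := (tendsto_log_sub_log_cobounded 0 c (pow_pos ha 2) (pow_pos hb 2)).mono_left
    IsOrderBornology.atTop_le_cobounded
  have hatanA := tendsto_arctan_add_div_atTop 0 ha
  simp only [add_zero] at hlog hatanA
  unfold lorentzianProductPrimitive
  convert ((hlog.const_mul (-(a * b * c))).add
    (hatanA.const_mul (b * (c ^ 2 + b ^ 2 - a ^ 2)))).add
    ((tendsto_arctan_add_div_atTop c hb).const_mul (a * (c ^ 2 + a ^ 2 - b ^ 2))) using 2
  ring

theorem tendsto_lorentzianProductPrimitive_atBot (ha : 0 < a) (hb : 0 < b) :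
    Tendsto (lorentzianProductPrimitive a b c) atBot
      (𝓝 (-(π / 2 * ((a + b) * (c ^ 2 + (a - b) ^ 2))))) := by
  have hlog := (tendsto_log_sub_log_cobounded 0 c (pow_pos ha 2) (pow_pos hb 2)).mono_left
    IsOrderBornology.atBot_le_cobounded
  have hatanA := tendsto_arctan_add_div_atBot 0 ha
  simp only [add_zero] at hlog hatanA
  unfold lorentzianProductPrimitive
  convert ((hlog.const_mul (-(a * b * c))).add
    (hatanA.const_mul (b * (c ^ 2 + b ^ 2 - a ^ 2)))).add
    ((tendsto_arctan_add_div_atBot c hb).const_mul (a * (c ^ 2 + a ^ 2 - b ^ 2))) using 2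
  ring

theorem integrable_lorentzian_product (ha : 0 < a) (hb : 0 < b) :
    Integrable fun x : ℝ => a * b / ((x ^ 2 + a ^ 2) * ((x + c) ^ 2 + b ^ 2)) := by
  refine ((integrable_inv_one_add_sq.comp_div ha.ne').const_mul (a * b)⁻¹).mono'
    (continuous_const.div (by fun_prop) fun x => by positivity).aestronglyMeasurable
    (Eventually.of_forall fun x => ?_)
  rw [norm_of_nonneg (by positivity), div_le_iff₀ (by positivity)]
  field_simp
  nlinarith [sq_nonneg (x + c), mul_pos ha hb, sq_nonneg x]

theorem integral_lorentzian_product_mul (ha : 0 < a) (hb : 0 < b) :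
    (c ^ 2 + (a + b) ^ 2) * (c ^ 2 + (a - b) ^ 2) *
        ∫ x : ℝ, a * b / ((x ^ 2 + a ^ 2) * ((x + c) ^ 2 + b ^ 2)) =
      π * (a + b) * (c ^ 2 + (a - b) ^ 2) := by
  rw [← integral_const_mul, integral_of_hasDerivAt_of_tendsto
    (hasDerivAt_lorentzianProductPrimitive c ha.ne' hb.ne')
    ((integrable_lorentzian_product c ha hb).const_mul _)
    (tendsto_lorentzianProductPrimitive_atBot c ha hb)
    (tendsto_lorentzianProductPrimitive_atTop c ha hb)]
  ring

theorem integral_lorentzian_product (ha : 0 < a) (hb : 0 < b) (h : c ≠ 0 ∨ a ≠ b) :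
    ∫ x : ℝ, a * b / ((x ^ 2 + a ^ 2) * ((x + c) ^ 2 + b ^ 2)) =
      π * (a + b) / (c ^ 2 + (a + b) ^ 2) := by
  have hM : c ^ 2 + (a - b) ^ 2 ≠ 0 := by
    rcases h with hc | hab
    · exact (add_pos_of_pos_of_nonneg (pow_two_pos_of_ne_zero hc) (sq_nonneg _)).ne'
    · exact (add_pos_of_nonneg_of_pos (sq_nonneg _)
        (pow_two_pos_of_ne_zero (sub_ne_zero.2 hab))).ne'
  have hP : c ^ 2 + (a + b) ^ 2 ≠ 0 := by positivity
  rw [eq_div_iff hP]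
  apply mul_right_cancel₀ hM
  linear_combination integral_lorentzian_product_mul c ha hb

end LorentzianProduct

theorem integral_product_lorentzians_shifted (a d c : ℝ) (ha : 0 < a) (hd : 0 ≤ d)
    (hc : c ≠ 0) :
    ∫ x : ℝ, a * (a + d) / ((x ^ 2 + a ^ 2) * ((x + c) ^ 2 + (a + d) ^ 2)) =
      π * (2 * a + d) / (c ^ 2 + (2 * a + d) ^ 2) := by
  rw [integral_lorentzian_product c ha (by linarith) (Or.inl hc),
    show a + (a + d) = 2 * a + d by ring]
end

section
/- For real numbers b > a > 1: ₃F₂(1, 1, a; 2, b; 1) = ((b − 1)/(a − 1)) · (ψ(b − 1) − ψ(b − a)), where ψ is the digamma function. -/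
open Real

/-- Pochhammer symbol (rising factorial) for a real argument. -/
noncomputable def poch (q : ℝ) (n : ℕ) : ℝ := ∏ i ∈ Finset.range n, (q + i)

/-- Gauss hypergeometric function ₂F₁, defined by its power series. -/
noncomputable def hyp2F1 (a b c x : ℝ) : ℝ :=
  ∑' n : ℕ, poch a n * poch b n / (poch c n * n.factorial) * x ^ n

/-- Generalized hypergeometric function ₃F₂, defined by its power series. -/
noncomputable def hyp3F2 (a₁ a₂ a₃ b₁ b₂ x : ℝ) : ℝ :=
  ∑' n : ℕ, poch a₁ n * poch a₂ n * poch a₃ n / (poch b₁ n * poch b₂ n * n.factorial) * x ^ n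
/-- The digamma function ψ(x) = Γ'(x)/Γ(x). -/
noncomputable def digamma (x : ℝ) : ℝ := deriv Real.Gamma x / Real.Gamma x

/-!
Put `α = a - 1` and `c = b - a`. Up to the factor `(b - 1)/(a - 1)`, the `n`-th term of the
series is `(α)ₘ / (m (α + c)ₘ)` with `m = n + 1`. Since `(α)ₘ / (α + c)ₘ = B(α + m, c) / B(α, c)`
and `∑ uᵐ / m = -log (1 - u)`, summing under the beta integral gives
`B(α, c) ∑ₘ (α)ₘ / (m (α + c)ₘ) = ∫₀¹ u^(α-1) (1-u)^(c-1) (-log (1 - u)) du = -∂B(α, c)/∂c`,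
and the logarithmic derivative of `B(α, c) = Γ(α) Γ(c) / Γ(α + c)` in `c` is `ψ(c) - ψ(α + c)`.
-/

open MeasureTheory Set Filter ProbabilityTheory

lemma poch_pos {x : ℝ} (hx : 0 < x) (n : ℕ) : 0 < poch x n :=
  Finset.prod_pos fun _ _ => by positivity

lemma poch_succ (x : ℝ) (n : ℕ) : poch x (n + 1) = x * poch (x + 1) n := by
  rw [poch, Finset.prod_range_succ', poch, mul_comm]
  push_cast
  simp only [add_zero, add_assoc, add_comm (1 : ℝ)]

lemma Gamma_add_nat_eq_poch_mul {x : ℝ} (hx : 0 < x) (n : ℕ) :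
    Gamma (x + n) = poch x n * Gamma x := by
  induction n with
  | zero => simp [poch]
  | succ n ih =>
    rw [Nat.cast_succ, ← add_assoc, Gamma_add_one (by positivity), ih, poch, poch,
      Finset.prod_range_succ]
    ring

lemma poch_one (n : ℕ) : poch 1 n = n.factorial := by
  have h := Gamma_add_nat_eq_poch_mul one_pos n
  rwa [add_comm, Gamma_nat_eq_factorial, Gamma_one, mul_one, eq_comm] at h

lemma poch_two (n : ℕ) : poch 2 n = (n + 1).factorial := by
  have h := poch_succ 1 n
  rw [poch_one, one_mul, one_add_one_eq_two] at h
  exact h.symm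

lemma ofReal_rpow_mul_one_sub_rpow {p q u : ℝ} (hu : u ∈ Ioo (0 : ℝ) 1) :
    ((u ^ (p - 1) * (1 - u) ^ (q - 1) : ℝ) : ℂ) =
      (u : ℂ) ^ ((p : ℂ) - 1) * (1 - (u : ℂ)) ^ ((q : ℂ) - 1) := by
  push_cast [Complex.ofReal_cpow hu.1.le, Complex.ofReal_cpow (sub_nonneg.2 hu.2.le)]
  rfl

lemma integrableOn_cpow_mul_one_sub_cpow {p q : ℝ} (hp : 0 < p) (hq : 0 < q) :
    IntegrableOn (fun u : ℝ => (u : ℂ) ^ ((p : ℂ) - 1) * (1 - (u : ℂ)) ^ ((q : ℂ) - 1))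
      (Ioo 0 1) := by
  rw [← intervalIntegrable_iff_integrableOn_Ioo_of_le zero_le_one]
  exact Complex.betaIntegral_convergent (by simpa) (by simpa)

lemma integrableOn_rpow_mul_one_sub_rpow {p q : ℝ} (hp : 0 < p) (hq : 0 < q) :
    IntegrableOn (fun u : ℝ => u ^ (p - 1) * (1 - u) ^ (q - 1)) (Ioo 0 1) :=
  IntegrableOn.congr_fun (integrableOn_cpow_mul_one_sub_cpow hp hq).re
    (fun u hu => by simp [← ofReal_rpow_mul_one_sub_rpow hu]) measurableSet_Ioo

lemma integral_rpow_mul_one_sub_rpow {p q : ℝ} (hp : 0 < p) (hq : 0 < q) :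
    ∫ u in Ioo (0 : ℝ) 1, u ^ (p - 1) * (1 - u) ^ (q - 1) = beta p q := by
  rw [beta_eq_betaIntegralReal p q hp hq, Complex.betaIntegral,
    intervalIntegral.integral_of_le zero_le_one, integral_Ioc_eq_integral_Ioo,
    ← RCLike.re_to_complex, ← integral_re (integrableOn_cpow_mul_one_sub_cpow hp hq)]
  exact setIntegral_congr_fun measurableSet_Ioo fun u hu => by
    simp [← ofReal_rpow_mul_one_sub_rpow hu]

lemma hasDerivAt_Gamma_of_pos {x : ℝ} (hx : 0 < x) :
    HasDerivAt Gamma (digamma x * Gamma x) x := by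
  have hd := differentiableAt_Gamma fun m => by linarith [(m.cast_nonneg : (0 : ℝ) ≤ m)]
  rw [digamma, div_mul_cancel₀ _ (Gamma_pos_of_pos hx).ne']
  exact hd.hasDerivAt

lemma hasDerivAt_beta_right {p q : ℝ} (hp : 0 < p) (hq : 0 < q) :
    HasDerivAt (beta p) (beta p q * (digamma q - digamma (p + q))) q := by
  have hpq : 0 < p + q := add_pos hp hq
  have hnum := (hasDerivAt_Gamma_of_pos hq).const_mul (Gamma p)
  have hden := (hasDerivAt_Gamma_of_pos hpq).comp_const_add p q
  have hΓ := (Gamma_pos_of_pos hpq).ne'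
  refine (hnum.div hden hΓ).congr_deriv ?_
  simp only [beta]
  field_simp

lemma rpow_mul_abs_log_le {x s ε : ℝ} (hx0 : 0 < x) (hx1 : x ≤ 1) (hε : 0 < ε) :
    x ^ s * |log x| ≤ x ^ (s - ε) / ε := by
  have h := abs_log_mul_self_rpow_lt x ε hx0 hx1 hε
  rw [abs_mul, abs_of_pos (rpow_pos_of_pos hx0 ε)] at h
  calc x ^ s * |log x| = x ^ (s - ε) * (|log x| * x ^ ε) := by
        rw [mul_left_comm, ← rpow_add hx0, sub_add_cancel, mul_comm]
    _ ≤ x ^ (s - ε) * (1 / ε) := by gcongr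
    _ = x ^ (s - ε) / ε := by ring

lemma hasDerivAt_integral_rpow_mul_one_sub_rpow {p q : ℝ} (hp : 0 < p) (hq : 0 < q) :
    IntegrableOn (fun u : ℝ => u ^ (p - 1) * (1 - u) ^ (q - 1) * log (1 - u)) (Ioo 0 1) ∧
    HasDerivAt (fun t => ∫ u in Ioo (0 : ℝ) 1, u ^ (p - 1) * (1 - u) ^ (t - 1))
      (∫ u in Ioo (0 : ℝ) 1, u ^ (p - 1) * (1 - u) ^ (q - 1) * log (1 - u)) q := by
  have hq4 : 0 < q / 4 := by positivity
  refine hasDerivAt_integral_of_dominated_loc_of_deriv_le (Metric.ball_mem_nhds q (half_pos hq))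
    (μ := volume.restrict (Ioo 0 1)) (F := fun t u => u ^ (p - 1) * (1 - u) ^ (t - 1))
    (F' := fun t u => u ^ (p - 1) * (1 - u) ^ (t - 1) * log (1 - u))
    (bound := fun u => u ^ (p - 1) * (1 - u) ^ (q / 4 - 1) / (q / 4))
    (Eventually.of_forall fun t => by fun_prop) (integrableOn_rpow_mul_one_sub_rpow hp hq)
    (by fun_prop) ?_ ((integrableOn_rpow_mul_one_sub_rpow hp hq4).div_const _) ?_
  all_goals
    refine (ae_restrict_iff' measurableSet_Ioo).2 (Eventually.of_forall fun u ⟨hu0, hu1⟩ t ht => ?_)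
    have h1u : 0 < 1 - u := sub_pos.2 hu1
  · rw [Metric.mem_ball, Real.dist_eq, abs_lt] at ht
    rw [norm_mul, norm_mul, norm_of_nonneg (rpow_pos_of_pos hu0 _).le,
      norm_of_nonneg (rpow_pos_of_pos h1u _).le, norm_eq_abs, mul_assoc, mul_div_assoc]
    gcongr
    calc (1 - u) ^ (t - 1) * |log (1 - u)| ≤ (1 - u) ^ (t - 1 - q / 4) / (q / 4) :=
          rpow_mul_abs_log_le h1u (by linarith) hq4
      _ ≤ (1 - u) ^ (q / 4 - 1) / (q / 4) := by
          gcongr ?_ / _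
          exact rpow_le_rpow_of_exponent_ge h1u (by linarith) (by linarith)
  · have hd := ((hasStrictDerivAt_const_rpow h1u (t - 1)).hasDerivAt.comp t
      ((hasDerivAt_id t).sub_const 1)).const_mul (u ^ (p - 1))
    simpa [mul_assoc] using hd

lemma integral_rpow_mul_one_sub_rpow_mul_neg_log {p q : ℝ} (hp : 0 < p) (hq : 0 < q) :
    ∫ u in Ioo (0 : ℝ) 1, u ^ (p - 1) * (1 - u) ^ (q - 1) * -log (1 - u) =
      beta p q * (digamma (p + q) - digamma q) := by
  have hbeta :
      (fun t => ∫ u in Ioo (0 : ℝ) 1, u ^ (p - 1) * (1 - u) ^ (t - 1)) =ᶠ[nhds q] beta p :=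
    (lt_mem_nhds hq).mono fun t ht => integral_rpow_mul_one_sub_rpow hp ht
  have hderiv := ((hasDerivAt_integral_rpow_mul_one_sub_rpow hp hq).2.congr_of_eventuallyEq
    hbeta.symm).unique (hasDerivAt_beta_right hp hq)
  simp only [mul_neg, integral_neg, hderiv]
  ring

lemma beta_add_nat_left {α c : ℝ} (hα : 0 < α) (hc : 0 < c) (m : ℕ) :
    beta (α + m) c = poch α m / poch (α + c) m * beta α c := by
  have hαc : 0 < α + c := add_pos hα hc
  have := (Gamma_pos_of_pos hαc).ne'
  have := (poch_pos hαc m).ne'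
  simp only [beta]
  rw [add_right_comm, Gamma_add_nat_eq_poch_mul hα, Gamma_add_nat_eq_poch_mul hαc]
  field_simp

lemma hasSum_pow_div_nat {u : ℝ} (hu : |u| < 1) :
    HasSum (fun m : ℕ => u ^ m / m) (-log (1 - u)) := by
  rw [← hasSum_nat_add_iff' 1]
  simpa using hasSum_pow_div_log_of_abs_lt_one hu

lemma integral_rpow_mul_one_sub_rpow_mul_pow_div {α c : ℝ} (hα : 0 < α) (hc : 0 < c) (m : ℕ) :
    ∫ u in Ioo (0 : ℝ) 1, u ^ (α - 1) * (1 - u) ^ (c - 1) * (u ^ m / m) =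
      poch α m / (m * poch (α + c) m) * beta α c := by
  have hshift : ∀ u ∈ Ioo (0 : ℝ) 1, u ^ (α - 1) * (1 - u) ^ (c - 1) * (u ^ m / m) =
      u ^ (α + m - 1) * (1 - u) ^ (c - 1) / m := fun u hu => by
    rw [add_sub_right_comm, rpow_add hu.1, rpow_natCast]
    ring
  rw [setIntegral_congr_fun measurableSet_Ioo hshift, integral_div,
    integral_rpow_mul_one_sub_rpow (by positivity) hc, beta_add_nat_left hα hc]
  ring

-- The `m = 0` term vanishes because `x / 0 = 0`.
theorem hasSum_poch_div_mul_poch {α c : ℝ} (hα : 0 < α) (hc : 0 < c) :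
    HasSum (fun m : ℕ => poch α m / (m * poch (α + c) m)) (digamma (α + c) - digamma c) := by
  set F : ℕ → ℝ → ℝ := fun m u => u ^ (α - 1) * (1 - u) ^ (c - 1) * (u ^ m / m)
  have hF_nonneg : ∀ m, ∀ u ∈ Ioo (0 : ℝ) 1, 0 ≤ F m u := fun m u ⟨hu0, hu1⟩ => by
    have := sub_pos.2 hu1
    positivity
  have hF_sum : ∀ u ∈ Ioo (0 : ℝ) 1,
      HasSum (F · u) (u ^ (α - 1) * (1 - u) ^ (c - 1) * -log (1 - u)) := fun u ⟨hu0, hu1⟩ =>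
    (hasSum_pow_div_nat (by rwa [abs_of_pos hu0])).mul_left _
  have hF_int : IntegrableOn (fun u => ∑' m, F m u) (Ioo 0 1) :=
    (hasDerivAt_integral_rpow_mul_one_sub_rpow hα hc).1.neg.congr_fun
      (fun u hu => by simp only [(hF_sum u hu).tsum_eq, mul_neg, Pi.neg_apply]) measurableSet_Ioo
  have h := hasSum_integral_of_dominated_convergence (μ := volume.restrict (Ioo 0 1)) F
    (fun m => by fun_prop)
    (fun m => (ae_restrict_iff' measurableSet_Ioo).2 (Eventually.of_forall fun u hu =>
      (norm_of_nonneg (hF_nonneg m u hu)).le))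
    ((ae_restrict_iff' measurableSet_Ioo).2 (Eventually.of_forall fun u hu =>
      (hF_sum u hu).summable))
    hF_int
    ((ae_restrict_iff' measurableSet_Ioo).2 (Eventually.of_forall hF_sum))
  simp only [F, integral_rpow_mul_one_sub_rpow_mul_pow_div hα hc,
    integral_rpow_mul_one_sub_rpow_mul_neg_log hα hc] at h
  have hB := (beta_pos hα hc).ne'
  simpa [mul_div_cancel_left₀ _ hB, mul_div_cancel_right₀ _ hB] using h.div_const (beta α c)

lemma hasSum_poch_div_succ_mul_poch {a b : ℝ} (ha : 1 < a) (hab : a < b) :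
    HasSum (fun n : ℕ => poch a n / ((n + 1) * poch b n))
      ((b - 1) / (a - 1) * (digamma (b - 1) - digamma (b - a))) := by
  have h := hasSum_poch_div_mul_poch (sub_pos.2 ha) (sub_pos.2 hab)
  rw [sub_add_sub_cancel', ← hasSum_nat_add_iff' 1] at h
  simp only [Finset.sum_range_one, Nat.cast_zero, zero_mul, div_zero, sub_zero] at h
  refine (h.mul_left ((b - 1) / (a - 1))).congr_fun fun n => ?_
  have hb : b - 1 ≠ 0 := by linarith
  have ha' : a - 1 ≠ 0 := by linarith
  have := (poch_pos (by linarith : 0 < b) n).ne'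
  rw [poch_succ, poch_succ, sub_add_cancel, sub_add_cancel]
  push_cast
  field_simp

theorem hyp3F2_digamma (a b : ℝ) (hab : a < b) (ha : 1 < a) :
    hyp3F2 1 1 a 2 b 1 = ((b - 1) / (a - 1)) * (digamma (b - 1) - digamma (b - a)) := by
  refine (tsum_congr fun n => ?_).trans (hasSum_poch_div_succ_mul_poch ha hab).tsum_eq
  have := (n.factorial_pos).ne'
  rw [poch_one, poch_two, Nat.factorial_succ, one_pow, mul_one]
  push_cast
  field_simp
end
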